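/- For nonnegative integers k <= n: sum_{i=k}^n [i choose k]_q * q^i/(1-q^i) = [n choose k]_q * q^k/(1-q^k), where k >= 1. -/

import Mathlib

open Finset

variable {F : Type*} [Field F]

/-- `(q;q)_n = (1-q)(1-q^2)...(1-q^n)` -/
def qfac (q : F) (n : ℕ) : F := ∏ j ∈ Finset.range n, (1 - q ^ (j + 1))

/-- `(z;q)_k = (1-z)(1-zq)...(1-zq^{k-1})` -/
def qpoch (z q : F) (k : ℕ) : F := ∏ j ∈ Finset.range k, (1 - z * q ^ j)

/-- Gaussian binomial coefficient `[n choose k]_q` -/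
def qbinom (q : F) (n k : ℕ) : F := qfac q n / (qfac q k * qfac q (n - k))

/-- Sum over weakly increasing `m`-tuples `lo ≤ i_1 ≤ ... ≤ i_m ≤ n` of
`∏_j q^{i_j}/(1-q^{i_j})` (equal to `1` when `m = 0`). -/
def chainSum (q : F) (lo n m : ℕ) : F :=
  ∑ c ∈ Finset.univ.filter (fun c : Fin m → Fin (n + 1) =>
      (∀ j k : Fin m, j ≤ k → c j ≤ c k) ∧ ∀ j, lo ≤ (c j : ℕ)),
    ∏ j, q ^ (c j : ℕ) / (1 - q ^ (c j : ℕ))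

/-- Complete homogeneous symmetric function `h_m` of the variables
`x lo, x (lo+1), ..., x n`. -/
def hSum {R : Type*} [CommRing R] (x : ℕ → R) (lo n m : ℕ) : R :=
  ∑ c ∈ Finset.univ.filter (fun c : Fin m → Fin (n + 1) =>
      (∀ j k : Fin m, j ≤ k → c j ≤ c k) ∧ ∀ j, lo ≤ (c j : ℕ)),
    ∏ j, x (c j : ℕ)

/-! Induction on `n`, the case `n = k` being a single term. Adding the term `i = n + 1` to the
sum must turn `[n choose k]_q` into `[n+1 choose k]_q` on the right-hand side, and it does because
`[n+1 choose k]_q (1 - q^(n+1-k)) = [n choose k]_q (1 - q^(n+1))` and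
`q^k/(1-q^k) - q^(n+1)/(1-q^(n+1)) = q^k (1 - q^(n+1-k)) / ((1-q^k)(1-q^(n+1)))`. -/

theorem qfac_succ (q : F) (n : ℕ) : qfac q (n + 1) = qfac q n * (1 - q ^ (n + 1)) :=
  prod_range_succ _ _

theorem qbinom_succ_mul {q : F} {n k : ℕ} (hkn : k ≤ n) (hq : 1 - q ^ (n + 1 - k) ≠ 0) :
    qbinom q (n + 1) k * (1 - q ^ (n + 1 - k)) = qbinom q n k * (1 - q ^ (n + 1)) := by
  rw [Nat.sub_add_comm hkn] at hq
  rw [qbinom, qbinom, Nat.sub_add_comm hkn, qfac_succ, qfac_succ, ← mul_assoc,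
    div_mul_eq_div_div, div_mul_cancel₀ _ hq, mul_div_right_comm]

/-- The induction step, with `a = q^k` and `c = q^(n+1-k)`. -/
theorem add_mul_div_one_sub_eq {B b a c : F} (hB : B * (1 - c) = b * (1 - c * a)) (ha : 1 - a ≠ 0)
    (hca : 1 - c * a ≠ 0) :
    b * (a / (1 - a)) + B * (c * a / (1 - c * a)) = B * (a / (1 - a)) := by
  rw [mul_div_assoc', mul_div_assoc', mul_div_assoc', div_add_div _ _ ha hca,
    div_eq_div_iff (mul_ne_zero ha hca) ha]
  linear_combination -a * (1 - a) * hB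

theorem fu_lascoux_lemma2_m1 (q : F) (k n : ℕ) (hk : 1 ≤ k) (hkn : k ≤ n)
    (hq : ∀ i : ℕ, 1 ≤ i → q ^ i ≠ 1) :
    ∑ i ∈ Finset.Icc k n, qbinom q i k * (q ^ i / (1 - q ^ i))
      = qbinom q n k * q ^ k / (1 - q ^ k) := by
  have hsub : ∀ i, 1 ≤ i → 1 - q ^ i ≠ 0 := fun i hi => sub_ne_zero.mpr (hq i hi).symm
  rw [mul_div_assoc]
  induction n, hkn using Nat.le_induction with
  | base => rw [Icc_self, sum_singleton]
  | succ n hkn ih =>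
    have hpow : q ^ (n + 1) = q ^ (n + 1 - k) * q ^ k := by
      rw [← pow_add, Nat.sub_add_cancel (by omega)]
    rw [sum_Icc_succ_top (by omega), ih, hpow]
    refine add_mul_div_one_sub_eq ?_ (hsub k hk) (hpow ▸ hsub (n + 1) (by omega))
    rw [← hpow]
    exact qbinom_succ_mul hkn (hsub _ (by omega))
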